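/- arXiv:math/0605713 — 2 statements merged into one kernel-verified Lean document; each statement's English description precedes it below -/
import Mathlib

section
/- The characteristic function χ_P of a subset P of a hemiring S is a prime fuzzy left h-ideal of S if and only if P is a prime left h-ideal of S. -/
open scoped BigOperators

variable {S : Type*}

def IsFuzzySet (μ : S → ℝ) : Prop := ∀ x, μ x ∈ Set.Icc (0:ℝ) 1

def IsFuzzyLeftHIdeal [NonUnitalSemiring S] (μ : S → ℝ) : Prop :=
  IsFuzzySet μ ∧
  (∀ x y : S, min (μ x) (μ y) ≤ μ (x + y)) ∧
  (∀ x y : S, μ y ≤ μ (x * y)) ∧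
  (∀ a b x z : S, x + a + z = b + z → min (μ a) (μ b) ≤ μ x)

def IsFuzzyRightHIdeal [NonUnitalSemiring S] (μ : S → ℝ) : Prop :=
  IsFuzzySet μ ∧
  (∀ x y : S, min (μ x) (μ y) ≤ μ (x + y)) ∧
  (∀ x y : S, μ x ≤ μ (x * y)) ∧
  (∀ a b x z : S, x + a + z = b + z → min (μ a) (μ b) ≤ μ x)

/-- The h-product of two fuzzy sets (equal to 0 when no representation exists). -/
noncomputable def hProd [NonUnitalSemiring S] (μ ν : S → ℝ) (x : S) : ℝ :=
  sSup (insert 0 {r | ∃ a₁ b₁ a₂ b₂ z : S, x + a₁ * b₁ + z = a₂ * b₂ + z ∧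
    r = min (min (μ a₁) (μ a₂)) (min (ν b₁) (ν b₂))})

def IsLeftHIdeal [NonUnitalSemiring S] (A : Set S) : Prop :=
  A.Nonempty ∧ (∀ a ∈ A, ∀ b ∈ A, a + b ∈ A) ∧ (∀ s : S, ∀ a ∈ A, s * a ∈ A) ∧
  (∀ x z a b : S, a ∈ A → b ∈ A → x + a + z = b + z → x ∈ A)

def IsRightHIdeal [NonUnitalSemiring S] (A : Set S) : Prop :=
  A.Nonempty ∧ (∀ a ∈ A, ∀ b ∈ A, a + b ∈ A) ∧ (∀ s : S, ∀ a ∈ A, a * s ∈ A) ∧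
  (∀ x z a b : S, a ∈ A → b ∈ A → x + a + z = b + z → x ∈ A)

/-- h-closure of a subset of a hemiring. -/
def hCl [NonUnitalSemiring S] (A : Set S) : Set S :=
  {x | ∃ a₁ ∈ A, ∃ a₂ ∈ A, ∃ z : S, x + a₁ + z = a₂ + z}

/-- AB : the set of finite (nonempty) sums of products ab, a ∈ A, b ∈ B. -/
def setProd [NonUnitalSemiring S] (A B : Set S) : Set S :=
  {x | ∃ (n : ℕ) (a b : Fin (n + 1) → S), (∀ i, a i ∈ A) ∧ (∀ i, b i ∈ B) ∧
    x = ∑ i, a i * b i}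

def IsPrimeLeftHIdeal [NonUnitalSemiring S] (P : Set S) : Prop :=
  IsLeftHIdeal P ∧ P ≠ Set.univ ∧
  ∀ A B : Set S, IsLeftHIdeal A → IsLeftHIdeal B → setProd A B ⊆ P → A ⊆ P ∨ B ⊆ P

def IsPrimeFuzzyLeftHIdeal [NonUnitalSemiring S] (ζ : S → ℝ) : Prop :=
  IsFuzzyLeftHIdeal ζ ∧ (∃ x y : S, ζ x ≠ ζ y) ∧
  ∀ μ ν : S → ℝ, IsFuzzyLeftHIdeal μ → IsFuzzyLeftHIdeal ν →
    (∀ x, hProd μ ν x ≤ ζ x) → (∀ x, μ x ≤ ζ x) ∨ (∀ x, ν x ≤ ζ x)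

def IsHHemiregular (S : Type*) [NonUnitalSemiring S] : Prop :=
  ∀ a : S, ∃ x₁ x₂ z : S, a + a * x₁ * a + z = a * x₂ * a + z

/-!
For a left h-ideal `P`, the characteristic functions of left h-ideals `A`, `B` satisfy
`χ_A ∘ₕ χ_B ≤ χ_P` as soon as `AB ⊆ P`, since `P` is h-closed; this turns fuzzy primality of `χ_P`
into primality of `P`. Conversely, if fuzzy left h-ideals `μ`, `ν` with `μ ∘ₕ ν ≤ χ_P` had points
`x ∉ P`, `y ∉ P` with `μ x > 0`, `ν y > 0`, the level sets `A = {μ ≥ μ x}`, `B = {ν ≥ ν y}` would be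
left h-ideals with `AB ⊆ P`, because `(μ ∘ₕ ν)(ab) ≥ min (μ a) (ν b)`; primality of `P` then
puts `x` or `y` in `P`.
-/

lemma isFuzzySet_indicator_one (A : Set S) : IsFuzzySet (A.indicator (1 : S → ℝ)) := fun x => by
  by_cases hx : x ∈ A <;> simp [hx]

lemma indicator_one_le_indicator_one_iff {A B : Set S} {a b : S} :
    A.indicator (1 : S → ℝ) a ≤ B.indicator 1 b ↔ (a ∈ A → b ∈ B) := by
  by_cases ha : a ∈ A <;> by_cases hb : b ∈ B <;> simp [ha, hb]

lemma min_indicator_one_le_indicator_one_iff {A : Set S} {a b c : S} :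
    min (A.indicator (1 : S → ℝ) a) (A.indicator 1 b) ≤ A.indicator 1 c ↔
      (a ∈ A → b ∈ A → c ∈ A) := by
  by_cases ha : a ∈ A <;> by_cases hb : b ∈ A <;> by_cases hc : c ∈ A <;> simp [ha, hb, hc]

lemma forall_indicator_one_le_iff_subset {A P : Set S} :
    (∀ x, A.indicator (1 : S → ℝ) x ≤ P.indicator 1 x) ↔ A ⊆ P := by
  simp only [indicator_one_le_indicator_one_iff]
  rfl

lemma forall_le_indicator_one_iff {μ : S → ℝ} {P : Set S} (hμ : IsFuzzySet μ) :
    (∀ x, μ x ≤ P.indicator 1 x) ↔ ∀ x ∉ P, μ x ≤ 0 := by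
  refine ⟨fun h x hx => by simpa [hx] using h x, fun h x => ?_⟩
  by_cases hx : x ∈ P
  · simpa [hx] using (hμ x).2
  · simpa [hx] using h x hx

lemma exists_indicator_one_ne_iff {A : Set S} :
    (∃ x y, A.indicator (1 : S → ℝ) x ≠ A.indicator 1 y) ↔ A.Nonempty ∧ A ≠ Set.univ := by
  refine ⟨fun ⟨x, y, hxy⟩ => ⟨?_, ?_⟩, fun ⟨⟨x, hx⟩, hA⟩ => ?_⟩
  · by_contra h
    simp [Set.not_nonempty_iff_eq_empty.1 h] at hxy
  · rintro rfl
    simp at hxy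
  · obtain ⟨y, hy⟩ := Set.ne_univ_iff_exists_notMem A |>.1 hA
    exact ⟨x, y, by simp [hx, hy]⟩

section
variable [NonUnitalSemiring S] {A B P : Set S} {μ ν : S → ℝ}

lemma isFuzzyLeftHIdeal_indicator_one_iff (hA : A.Nonempty) :
    IsFuzzyLeftHIdeal (A.indicator (1 : S → ℝ)) ↔ IsLeftHIdeal A := by
  simp only [IsFuzzyLeftHIdeal, IsLeftHIdeal, isFuzzySet_indicator_one,
    min_indicator_one_le_indicator_one_iff, indicator_one_le_indicator_one_iff, true_and, hA]
  exact ⟨fun ⟨hadd, hmul, hh⟩ => ⟨fun a ha b hb => hadd a b ha hb, hmul,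
      fun x z a b ha hb h => hh a b x z h ha hb⟩,
    fun ⟨hadd, hmul, hh⟩ => ⟨fun a b ha hb => hadd a ha b hb, hmul,
      fun a b x z h ha hb => hh x z a b ha hb h⟩⟩

lemma isLeftHIdeal_setOf_le (hμ : IsFuzzyLeftHIdeal μ) {t : ℝ} {x : S} (hx : t ≤ μ x) :
    IsLeftHIdeal {y | t ≤ μ y} := by
  obtain ⟨-, hadd, hmul, hh⟩ := hμ
  exact ⟨⟨x, hx⟩, fun a ha b hb => (le_min ha hb).trans (hadd a b),
    fun s a ha => ha.trans (hmul s a),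
    fun x z a b ha hb h => (le_min ha hb).trans (hh a b x z h)⟩

lemma mul_mem_setProd {a b : S} (ha : a ∈ A) (hb : b ∈ B) : a * b ∈ setProd A B :=
  ⟨0, fun _ => a, fun _ => b, fun _ => ha, fun _ => hb, by simp⟩

lemma setProd_subset_iff (hP : ∀ a ∈ P, ∀ b ∈ P, a + b ∈ P) :
    setProd A B ⊆ P ↔ ∀ a ∈ A, ∀ b ∈ B, a * b ∈ P := by
  refine ⟨fun h a ha b hb => h (mul_mem_setProd ha hb), ?_⟩
  rintro h _ ⟨n, a, b, ha, hb, rfl⟩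
  exact Finset.sum_induction_nonempty _ (· ∈ P) (fun x y hx hy => hP x hx y hy)
    Finset.univ_nonempty fun i _ => h _ (ha i) _ (hb i)

lemma le_hProd (hμ : IsFuzzySet μ) {x a₁ b₁ a₂ b₂ z : S} (h : x + a₁ * b₁ + z = a₂ * b₂ + z) :
    min (min (μ a₁) (μ a₂)) (min (ν b₁) (ν b₂)) ≤ hProd μ ν x := by
  refine le_csSup ⟨1, ?_⟩ (Set.mem_insert_of_mem _ ⟨a₁, b₁, a₂, b₂, z, h, rfl⟩)
  rintro r (rfl | ⟨a₁, -, -, -, -, -, rfl⟩)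
  · exact zero_le_one
  · exact (min_le_left _ _).trans ((min_le_left _ _).trans (hμ a₁).2)

lemma hProd_le {x : S} {c : ℝ} (hc : 0 ≤ c)
    (h : ∀ a₁ b₁ a₂ b₂ z, x + a₁ * b₁ + z = a₂ * b₂ + z →
      min (min (μ a₁) (μ a₂)) (min (ν b₁) (ν b₂)) ≤ c) :
    hProd μ ν x ≤ c := by
  refine csSup_le ⟨0, Set.mem_insert _ _⟩ ?_
  rintro r (rfl | ⟨a₁, b₁, a₂, b₂, z, hx, rfl⟩)
  exacts [hc, h a₁ b₁ a₂ b₂ z hx]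

-- `ab` is represented as `ab + ab + ab = (a + a)b + ab`, and `μ (a + a) ≥ μ a`.
lemma min_le_hProd_mul (hμ : IsFuzzyLeftHIdeal μ) (a b : S) :
    min (μ a) (ν b) ≤ hProd μ ν (a * b) :=
  calc min (μ a) (ν b) ≤ min (min (μ a) (μ (a + a))) (min (ν b) (ν b)) :=
        min_le_min (le_min le_rfl (by simpa using hμ.2.1 a a)) (min_self _).ge
    _ ≤ hProd μ ν (a * b) := le_hProd hμ.1 (z := a * b) (by rw [add_mul])

lemma hProd_indicator_one_le (hP : IsLeftHIdeal P) (hAB : ∀ a ∈ A, ∀ b ∈ B, a * b ∈ P) (x : S) :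
    hProd (A.indicator 1) (B.indicator 1) x ≤ P.indicator (1 : S → ℝ) x := by
  refine hProd_le (Set.indicator_nonneg (fun _ _ => zero_le_one) x) fun a₁ b₁ a₂ b₂ z h => ?_
  have hx : a₁ ∈ A → a₂ ∈ A → b₁ ∈ B → b₂ ∈ B → x ∈ P := fun h₁ h₂ h₃ h₄ =>
    hP.2.2.2 x z _ _ (hAB _ h₁ _ h₃) (hAB _ h₂ _ h₄) h
  classical
  simp only [Set.indicator_apply, Pi.one_apply]
  split_ifs <;> simp_all

lemma IsPrimeFuzzyLeftHIdeal.isPrimeLeftHIdeal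
    (h : IsPrimeFuzzyLeftHIdeal (P.indicator (1 : S → ℝ))) : IsPrimeLeftHIdeal P := by
  obtain ⟨hfuzzy, hnonconst, hprime⟩ := h
  obtain ⟨hne, hnuniv⟩ := exists_indicator_one_ne_iff.1 hnonconst
  have hP : IsLeftHIdeal P := (isFuzzyLeftHIdeal_indicator_one_iff hne).1 hfuzzy
  refine ⟨hP, hnuniv, fun A B hA hB hAB => ?_⟩
  simpa only [forall_indicator_one_le_iff_subset] using
    hprime _ _ ((isFuzzyLeftHIdeal_indicator_one_iff hA.1).2 hA)
      ((isFuzzyLeftHIdeal_indicator_one_iff hB.1).2 hB)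
      (hProd_indicator_one_le hP ((setProd_subset_iff hP.2.1).1 hAB))

lemma IsPrimeLeftHIdeal.isPrimeFuzzyLeftHIdeal_indicator_one (h : IsPrimeLeftHIdeal P) :
    IsPrimeFuzzyLeftHIdeal (P.indicator (1 : S → ℝ)) := by
  obtain ⟨hP, hnuniv, hprime⟩ := h
  refine ⟨(isFuzzyLeftHIdeal_indicator_one_iff hP.1).2 hP,
    exists_indicator_one_ne_iff.2 ⟨hP.1, hnuniv⟩, fun μ ν hμ hν hle => ?_⟩
  simp only [forall_le_indicator_one_iff hμ.1, forall_le_indicator_one_iff hν.1]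
  by_contra! ⟨⟨x, hxP, hx⟩, y, hyP, hy⟩
  have hAB : setProd {a | μ x ≤ μ a} {b | ν y ≤ ν b} ⊆ P := by
    refine (setProd_subset_iff hP.2.1).2 fun a ha b hb => ?_
    by_contra hab
    have hpos : 0 < min (μ a) (ν b) := lt_min (hx.trans_le ha) (hy.trans_le hb)
    have hzero : hProd μ ν (a * b) ≤ 0 := by simpa [hab] using hle (a * b)
    linarith [min_le_hProd_mul hμ (ν := ν) a b]
  rcases hprime _ _ (isLeftHIdeal_setOf_le hμ le_rfl) (isLeftHIdeal_setOf_le hν le_rfl) hAB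
    with hA | hB
  exacts [hxP (hA (le_refl (μ x))), hyP (hB (le_refl (ν y)))]

end

-- The characteristic function in the statement is `P.indicator 1` definitionally.
open scoped Classical in
theorem char_prime_fuzzy_iff_prime [NonUnitalSemiring S] (P : Set S) :
    IsPrimeFuzzyLeftHIdeal (fun x => if x ∈ P then (1:ℝ) else 0) ↔
      IsPrimeLeftHIdeal P :=
  ⟨IsPrimeFuzzyLeftHIdeal.isPrimeLeftHIdeal,
    IsPrimeLeftHIdeal.isPrimeFuzzyLeftHIdeal_indicator_one⟩
end

section
/- Let μ be a fuzzy left h-ideal of a hemiring S and f : [0, μ(0)] → [0,1] an increasing (monotone) function. Then μ_f defined by μ_f(x) = f(μ(x)) is a fuzzy left h-ideal of S; moreover if f(t) ≥ t for all t ∈ [0, μ(0)], then μ ⊆ μ_f. -/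
open scoped BigOperators

variable {S : Type*}

theorem MonotoneOn.min_le_of_min_le {α β : Type*} [LinearOrder α] [LinearOrder β] {f : α → β}
    {s : Set α} (hf : MonotoneOn f s) {a b c : α} (ha : a ∈ s) (hb : b ∈ s) (hc : c ∈ s)
    (h : min a b ≤ c) : min (f a) (f b) ≤ f c := by
  rcases le_total a b with hab | hab
  · rw [min_eq_left hab] at h
    exact min_le_of_left_le (hf ha hc h)
  · rw [min_eq_right hab] at h
    exact min_le_of_right_le (hf hb hc h)

namespace IsFuzzyLeftHIdeal

variable [NonUnitalSemiring S] {μ : S → ℝ}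

theorem le_apply_zero (hμ : IsFuzzyLeftHIdeal μ) (x : S) : μ x ≤ μ 0 := by
  simpa using hμ.2.2.1 0 x

theorem mem_Icc (hμ : IsFuzzyLeftHIdeal μ) (x : S) : μ x ∈ Set.Icc 0 (μ 0) :=
  ⟨(hμ.1 x).1, hμ.le_apply_zero x⟩

theorem comp_of_monotoneOn (hμ : IsFuzzyLeftHIdeal μ) {f : ℝ → ℝ}
    (hf : MonotoneOn f (Set.Icc 0 (μ 0))) (hmaps : Set.MapsTo f (Set.Icc 0 (μ 0)) (Set.Icc 0 1)) :
    IsFuzzyLeftHIdeal (fun x => f (μ x)) := by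
  have mem := hμ.mem_Icc
  obtain ⟨-, hadd, hmul, hh⟩ := hμ
  have hmin {a b c : S} (h : min (μ a) (μ b) ≤ μ c) : min (f (μ a)) (f (μ b)) ≤ f (μ c) :=
    hf.min_le_of_min_le (mem a) (mem b) (mem c) h
  exact ⟨fun x => hmaps (mem x), fun x y => hmin (hadd x y),
    fun x y => hf (mem y) (mem (x * y)) (hmul x y),
    fun a b x z hz => hmin (hh a b x z hz)⟩

end IsFuzzyLeftHIdeal

theorem comp_increasing_fuzzy_left_h_ideal [NonUnitalSemiring S] (μ : S → ℝ)
    (hμ : IsFuzzyLeftHIdeal μ) (f : ℝ → ℝ)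
    (hmono : ∀ s t : ℝ, 0 ≤ s → s ≤ t → t ≤ μ 0 → f s ≤ f t)
    (hrange : ∀ t ∈ Set.Icc (0:ℝ) (μ 0), f t ∈ Set.Icc (0:ℝ) 1) :
    IsFuzzyLeftHIdeal (fun x => f (μ x)) ∧
      ((∀ t ∈ Set.Icc (0:ℝ) (μ 0), t ≤ f t) → ∀ x, μ x ≤ f (μ x)) :=
  ⟨hμ.comp_of_monotoneOn (fun s hs _ ht hst => hmono s _ hs.1 hst ht.2) hrange,
    fun hge x => hge _ (hμ.mem_Icc x)⟩
end
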